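/- arXiv:2401.04660 — 10 statements merged into one kernel-verified Lean document; each statement's English description precedes it below -/
import Mathlib

section
/- Let L ∈ ℝ^{M×M} (M ≥ 2) be a symmetric matrix whose off-diagonal entries are nonpositive, satisfying L·𝟏 = 0 (every row sums to zero), and irreducible. Then for any index i ∈ {1,…,M}, the (M−1)×(M−1) principal submatrix L̃ obtained from L by deleting the i-th row and the i-th column is positive definite (equivalently, −L̃ is Hurwitz). -/
open Matrix

/-- A matrix is irreducible if for every nonempty proper subset `S` of the index set
there exist `i ∈ S` and `j ∉ S` with `L i j ≠ 0`. -/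
def MatIrreducible {M : ℕ} (L : Matrix (Fin M) (Fin M) ℝ) : Prop :=
  ∀ S : Finset (Fin M), S.Nonempty → S ≠ Finset.univ →
    ∃ i ∈ S, ∃ j, j ∉ S ∧ L i j ≠ 0

/-!
Writing `x ↦ xᵀ L x` as the weighted Dirichlet form `½ ∑ⱼₖ (-Lⱼₖ)(xⱼ - xₖ)²` shows that `L`
is positive semidefinite and that `xᵀ L x = 0` forces `xⱼ = xₖ` along every nonzero entry
`Lⱼₖ`. By irreducibility such an `x` is constant. Deleting row and column `i` amounts to
restricting the form to vectors with `xᵢ = 0`, so there the only null vector is `0`.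
-/

theorem Matrix.dotProduct_mulVec_submatrix_succAbove {R : Type*} [CommSemiring R] {m : ℕ}
    (A : Matrix (Fin (m + 1)) (Fin (m + 1)) R) (i : Fin (m + 1)) (x : Fin m → R) :
    x ⬝ᵥ (A.submatrix i.succAbove i.succAbove *ᵥ x) =
      i.insertNth 0 x ⬝ᵥ (A *ᵥ i.insertNth 0 x) := by
  simp only [dotProduct, mulVec, submatrix_apply]
  rw [Fin.sum_univ_succAbove _ i]
  simp only [Fin.insertNth_apply_same, Fin.insertNth_apply_succAbove, zero_mul, zero_add]
  refine Finset.sum_congr rfl fun a _ => ?_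
  rw [Fin.sum_univ_succAbove _ i]
  simp only [Fin.insertNth_apply_same, Fin.insertNth_apply_succAbove, mul_zero, zero_add]

section Laplacian

variable {n : Type*} {L : Matrix n n ℝ}

theorem Matrix.neg_mul_sq_sub_nonneg (hoff : ∀ i j, i ≠ j → L i j ≤ 0) (y : n → ℝ) (j k : n) :
    0 ≤ -L j k * (y j - y k) ^ 2 := by
  rcases eq_or_ne j k with rfl | hjk
  · simp
  · exact mul_nonneg (neg_nonneg.mpr (hoff j k hjk)) (sq_nonneg _)

variable [Fintype n]

theorem Matrix.two_mul_dotProduct_mulVec_eq_sum_sq_sub (hsym : L.IsSymm)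
    (hone : L *ᵥ (fun _ => (1 : ℝ)) = 0) (y : n → ℝ) :
    2 * (y ⬝ᵥ (L *ᵥ y)) = ∑ j, ∑ k, -L j k * (y j - y k) ^ 2 := by
  have hrow : ∀ j, ∑ k, L j k = 0 := fun j => by
    simpa [mulVec, dotProduct] using congrFun hone j
  have hcol : ∀ k, ∑ j, L j k = 0 := fun k => by
    simpa only [hsym.apply] using hrow k
  have hrow_sq : ∑ j, ∑ k, L j k * y j ^ 2 = 0 :=
    Finset.sum_eq_zero fun j _ => by rw [← Finset.sum_mul, hrow j, zero_mul]
  have hcol_sq : ∑ j, ∑ k, L j k * y k ^ 2 = 0 := by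
    rw [Finset.sum_comm]
    exact Finset.sum_eq_zero fun k _ => by rw [← Finset.sum_mul, hcol k, zero_mul]
  calc 2 * (y ⬝ᵥ (L *ᵥ y))
      = ∑ j, ∑ k, 2 * (L j k * y j * y k) - ∑ j, ∑ k, L j k * y j ^ 2
          - ∑ j, ∑ k, L j k * y k ^ 2 := by
        rw [hrow_sq, hcol_sq]
        simp only [dotProduct, mulVec, Finset.mul_sum, sub_zero]
        refine Finset.sum_congr rfl fun j _ => Finset.sum_congr rfl fun k _ => by ring
    _ = ∑ j, ∑ k, -L j k * (y j - y k) ^ 2 := by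
        simp only [← Finset.sum_sub_distrib]
        refine Finset.sum_congr rfl fun j _ => Finset.sum_congr rfl fun k _ => by ring

theorem Matrix.dotProduct_mulVec_nonneg_of_laplacian (hsym : L.IsSymm)
    (hoff : ∀ i j, i ≠ j → L i j ≤ 0) (hone : L *ᵥ (fun _ => (1 : ℝ)) = 0) (y : n → ℝ) :
    0 ≤ y ⬝ᵥ (L *ᵥ y) := by
  have h := two_mul_dotProduct_mulVec_eq_sum_sq_sub hsym hone y
  have : 0 ≤ ∑ j, ∑ k, -L j k * (y j - y k) ^ 2 :=
    Finset.sum_nonneg fun j _ => Finset.sum_nonneg fun k _ => neg_mul_sq_sub_nonneg hoff y j k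
  linarith

theorem Matrix.eq_of_dotProduct_mulVec_eq_zero_of_laplacian (hsym : L.IsSymm)
    (hoff : ∀ i j, i ≠ j → L i j ≤ 0) (hone : L *ᵥ (fun _ => (1 : ℝ)) = 0) {y : n → ℝ}
    (hy : y ⬝ᵥ (L *ᵥ y) = 0) {j k : n} (hjk : L j k ≠ 0) : y j = y k := by
  have hsum : ∑ j, ∑ k, -L j k * (y j - y k) ^ 2 = 0 := by
    rw [← two_mul_dotProduct_mulVec_eq_sum_sq_sub hsym hone y, hy, mul_zero]
  have hterm : -L j k * (y j - y k) ^ 2 = 0 := by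
    have hnonneg := neg_mul_sq_sub_nonneg hoff y
    rw [Finset.sum_eq_zero_iff_of_nonneg fun j _ =>
      Finset.sum_nonneg fun k _ => hnonneg j k] at hsum
    exact (Finset.sum_eq_zero_iff_of_nonneg fun k _ => hnonneg j k).mp
      (hsum j (Finset.mem_univ j)) k (Finset.mem_univ k)
  have : (y j - y k) ^ 2 = 0 := (mul_eq_zero.mp hterm).resolve_left (neg_ne_zero.mpr hjk)
  exact sub_eq_zero.mp (pow_eq_zero_iff two_ne_zero |>.mp this)

end Laplacian

theorem MatIrreducible.apply_eq_of_forall_ne_zero {M : ℕ} {L : Matrix (Fin M) (Fin M) ℝ}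
    (hirr : MatIrreducible L) {α : Type*} {y : Fin M → α}
    (hy : ∀ j k, L j k ≠ 0 → y j = y k) (i j : Fin M) : y j = y i := by
  classical
  set S := Finset.univ.filter fun j => y j = y i
  have hS : S = Finset.univ := by
    by_contra hne
    obtain ⟨a, ha, b, hb, hab⟩ := hirr S ⟨i, by simp [S]⟩ hne
    simp only [S, Finset.mem_filter, Finset.mem_univ, true_and] at ha hb
    exact hb (hy a b hab ▸ ha)
  have hj : j ∈ S := hS ▸ Finset.mem_univ j
  simpa [S] using hj

/-- If `L ∈ ℝ^{M×M}` (`M ≥ 2`) is symmetric, has nonpositive off-diagonal entries,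
satisfies `L·𝟏 = 0` and is irreducible, then deleting the `i`-th row and column yields
a positive definite matrix. -/
theorem stmt0 {M : ℕ} (L : Matrix (Fin (M + 2)) (Fin (M + 2)) ℝ)
    (hsym : L.IsSymm)
    (hoff : ∀ i j, i ≠ j → L i j ≤ 0)
    (hone : L *ᵥ (fun _ => (1 : ℝ)) = 0)
    (hirr : MatIrreducible L)
    (i : Fin (M + 2)) :
    (L.submatrix i.succAbove i.succAbove).PosDef := by
  refine posDef_iff_dotProduct_mulVec.mpr
    ⟨isHermitian_iff_isSymm.mpr (hsym.submatrix _), fun x hx => ?_⟩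
  rw [star_trivial, dotProduct_mulVec_submatrix_succAbove]
  set y : Fin (M + 2) → ℝ := i.insertNth 0 x
  refine (dotProduct_mulVec_nonneg_of_laplacian hsym hoff hone y).lt_of_ne' fun hy => hx ?_
  have hconst := hirr.apply_eq_of_forall_ne_zero
    fun j k => eq_of_dotProduct_mulVec_eq_zero_of_laplacian hsym hoff hone hy
  funext k
  simpa [y] using hconst i (i.succAbove k)
end

section
/- Let A ∈ ℝ^{n×n}, B^m ∈ ℝ^{n×m}, B^p ∈ ℝ^{n×r}, C ∈ ℝ^{p×n}. The following three statements are equivalent: (i) there exist matrices E ∈ ℝ^{n×n}, F ∈ ℝ^{n×m}, L, H ∈ ℝ^{n×p} such that F = (I − H C) B^m, (I − H C) B^p = 0, and E = (I − H C) A − (L − E H) C; (ii) there exists H ∈ ℝ^{n×p} such that H C B^p = B^p; (iii) rank(C B^p) = rank(B^p). -/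
open Matrix

/-- If `N` and `M` have the same rank and `ker M ≤ ker N` (as linear maps), then
`M` factors through `N` on the left. -/
lemma exists_left_factor {r p n : ℕ} (M : Matrix (Fin n) (Fin r) ℝ)
    (N : Matrix (Fin p) (Fin r) ℝ) (hrank : N.rank = M.rank)
    (hk : LinearMap.ker M.mulVecLin ≤ LinearMap.ker N.mulVecLin) :
    ∃ H : Matrix (Fin n) (Fin p) ℝ, H * N = M := by
  set f := N.mulVecLin with hf
  set g := M.mulVecLin with hg
  have hker : LinearMap.ker g = LinearMap.ker f := by
    apply Submodule.eq_of_le_of_finrank_le hk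
    have h1 := LinearMap.finrank_range_add_finrank_ker f
    have h2 := LinearMap.finrank_range_add_finrank_ker g
    have : Module.finrank ℝ (LinearMap.range f) = Module.finrank ℝ (LinearMap.range g) := hrank
    omega
  have hle : LinearMap.ker f ≤ LinearMap.ker g := hker.ge
  -- lift g through the quotient by ker f
  let φ0 : ((Fin r → ℝ) ⧸ LinearMap.ker f) →ₗ[ℝ] (Fin n → ℝ) :=
    (LinearMap.ker f).liftQ g hle
  let e : ((Fin r → ℝ) ⧸ LinearMap.ker f) ≃ₗ[ℝ] LinearMap.range f :=
    f.quotKerEquivRange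
  obtain ⟨q, hq⟩ := Submodule.exists_isCompl (LinearMap.range f)
  let π : (Fin p → ℝ) →ₗ[ℝ] LinearMap.range f :=
    Submodule.linearProjOfIsCompl _ q hq
  let Hmap : (Fin p → ℝ) →ₗ[ℝ] (Fin n → ℝ) := φ0 ∘ₗ (e.symm : LinearMap.range f →ₗ[ℝ] _) ∘ₗ π
  refine ⟨LinearMap.toMatrix' Hmap, ?_⟩
  apply Matrix.toLin'.injective
  rw [Matrix.toLin'_apply', Matrix.toLin'_apply', Matrix.mulVecLin_mul,
    ← Matrix.toLin'_apply' (LinearMap.toMatrix' Hmap), Matrix.toLin'_toMatrix']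
  refine LinearMap.ext fun x => ?_
  have hmem : f x ∈ LinearMap.range f := LinearMap.mem_range_self f x
  have hπ : π (f x) = ⟨f x, hmem⟩ :=
    Submodule.linearProjOfIsCompl_apply_left hq ⟨f x, hmem⟩
  have he : e (Submodule.Quotient.mk x) = ⟨f x, hmem⟩ := rfl
  have hsymm : e.symm ⟨f x, hmem⟩ = Submodule.Quotient.mk x := by
    rw [← he, LinearEquiv.symm_apply_apply]
  show Hmap (f x) = g x
  simp only [Hmap, LinearMap.comp_apply, LinearEquiv.coe_coe, hπ, hsymm]
  exact Submodule.liftQ_apply _ _ _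

/-- Equivalence of the three solvability conditions for the unknown-input-observer
decoupling equations. -/
theorem stmt2 {n m r p : ℕ} (A : Matrix (Fin n) (Fin n) ℝ)
    (Bm : Matrix (Fin n) (Fin m) ℝ) (Bp : Matrix (Fin n) (Fin r) ℝ)
    (C : Matrix (Fin p) (Fin n) ℝ) :
    ((∃ (E : Matrix (Fin n) (Fin n) ℝ) (F : Matrix (Fin n) (Fin m) ℝ)
        (L H : Matrix (Fin n) (Fin p) ℝ),
        F = (1 - H * C) * Bm ∧ (1 - H * C) * Bp = 0 ∧
          E = (1 - H * C) * A - (L - E * H) * C) ↔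
      (∃ H : Matrix (Fin n) (Fin p) ℝ, H * C * Bp = Bp)) ∧
    ((∃ H : Matrix (Fin n) (Fin p) ℝ, H * C * Bp = Bp) ↔
      (C * Bp).rank = Bp.rank) := by
  constructor
  · constructor
    · rintro ⟨E, F, L, H, -, hBp, -⟩
      refine ⟨H, ?_⟩
      have : Bp - H * C * Bp = 0 := by
        rw [← hBp, Matrix.sub_mul, Matrix.one_mul]
      linear_combination (norm := noncomm_ring) -this
    · rintro ⟨H, hH⟩
      refine ⟨(1 - H * C) * A, (1 - H * C) * Bm, ((1 - H * C) * A) * H, H, rfl, ?_, by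
        simp⟩
      rw [Matrix.sub_mul, Matrix.one_mul, hH, sub_self]
  · constructor
    · rintro ⟨H, hH⟩
      refine le_antisymm (Matrix.rank_mul_le_right C Bp) ?_
      calc Bp.rank = (H * (C * Bp)).rank := by rw [← Matrix.mul_assoc, hH]
        _ ≤ (C * Bp).rank := Matrix.rank_mul_le_right H (C * Bp)
    · intro hrank
      have hk : LinearMap.ker Bp.mulVecLin ≤ LinearMap.ker (C * Bp).mulVecLin := by
        intro x hx
        simp only [LinearMap.mem_ker, Matrix.mulVecLin_mul, LinearMap.comp_apply] at *
        rw [hx]; simp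
      obtain ⟨H, hH⟩ := exists_left_factor Bp (C * Bp) hrank hk
      exact ⟨H, by rw [Matrix.mul_assoc, hH]⟩
end

section
/- Let L ∈ ℝ^{M×M} (M ≥ 2) be symmetric with nonpositive off-diagonal entries, satisfying L·𝟏 = 0, and irreducible. Let E_1, …, E_M ∈ ℝ^{n×n} with E_1 Hurwitz, set K_1 = 0 and K_i = γ I_n for i ∈ {2,…,M}, let Ẽ := blockdiag(E_2, …, E_M) ∈ ℝ^{(M−1)n×(M−1)n}, let L̃ ∈ ℝ^{(M−1)×(M−1)} be obtained from L by deleting its first row and first column, and let μ > 0 be such that vᵀ L̃ v ≥ μ‖v‖² for all v. If γ > ‖Ẽ + Ẽᵀ‖ / (2μ) (operator norm), then the Mn×Mn matrix blockdiag(E_1, …, E_M) − blockdiag(K_1, …, K_M)·(L ⊗ I_n) is Hurwitz, where ⊗ denotes the Kronecker product. -/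
open Matrix Kronecker

/-- The operator norm of a real matrix, induced by the Euclidean norms. -/
noncomputable def opNorm {α β : Type*} [Fintype α] [Fintype β] [DecidableEq β]
    (M : Matrix α β ℝ) : ℝ :=
  ‖(Matrix.toEuclideanLin M).toContinuousLinearMap‖

/-- The Euclidean norm of a real vector. -/
noncomputable def eucNorm {α : Type*} [Fintype α] (v : α → ℝ) : ℝ :=
  ‖(WithLp.equiv 2 (α → ℝ)).symm v‖

/-- A real square matrix is Hurwitz if every eigenvalue of its complexification has
negative real part. -/
def IsHurwitz {n : Type*} [Fintype n] [DecidableEq n] (A : Matrix n n ℝ) : Prop :=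
  ∀ z ∈ spectrum ℂ (A.map Complex.ofReal), z.re < 0

/-- Block diagonal matrix with square blocks `E 0, …, E (k-1)`. -/
def bdiag {k n : ℕ} (E : Fin k → Matrix (Fin n) (Fin n) ℝ) :
    Matrix (Fin k × Fin n) (Fin k × Fin n) ℝ :=
  fun p q => if p.1 = q.1 then E p.1 p.2 q.2 else 0

/-!
Because `K₁ = 0`, the first block row of the error matrix is `[E₁ 0 ⋯ 0]`, so the matrix is block
lower triangular and each of its eigenvalues is an eigenvalue of `E₁` or of `Ẽ − γ (L̃ ⊗ I)`. The
latter has a negative definite quadratic form,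
`uᵀ (Ẽ − γ (L̃ ⊗ I)) u ≤ (‖Ẽ + Ẽᵀ‖ / 2 − γ μ) ‖u‖² < 0`, and a real matrix with negative definite
quadratic form is Hurwitz.
-/

theorem Fin.sum_prod_succ {M : Type*} [AddCommMonoid M] {k : ℕ} {ι : Type*} [Fintype ι]
    (f : Fin (k + 1) × ι → M) :
    ∑ q, f q = ∑ j, f (0, j) + ∑ q : Fin k × ι, f (q.1.succ, q.2) := by
  simp only [Fintype.sum_prod_type, Fin.sum_univ_succ]

section Spectrum

variable {K m : Type*} [Field K] [Fintype m] [DecidableEq m]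

theorem Matrix.mem_spectrum_iff_exists_mulVec_eq_smul (A : Matrix m m K) (z : K) :
    z ∈ spectrum K A ↔ ∃ v ≠ 0, A *ᵥ v = z • v := by
  rw [← Matrix.spectrum_toLin', ← Module.End.hasEigenvalue_iff_mem_spectrum,
    Module.End.hasEigenvalue_iff, Submodule.ne_bot_iff]
  simp [and_comm]

theorem Matrix.spectrum_subset_union_of_blockLowerTriangular {k : ℕ} {ι : Type*} [Fintype ι]
    [DecidableEq ι] (A : Matrix (Fin (k + 1) × ι) (Fin (k + 1) × ι) K)
    (hA : ∀ i q, q.1 ≠ 0 → A (0, i) q = 0) :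
    spectrum K A ⊆ spectrum K (A.submatrix (Prod.mk 0) (Prod.mk 0)) ∪
      spectrum K (A.submatrix (Prod.map Fin.succ id) (Prod.map Fin.succ id)) := by
  intro z hz
  obtain ⟨v, hv, hAv⟩ := (A.mem_spectrum_iff_exists_mulVec_eq_smul z).1 hz
  have hrow (p) : ∑ q, A p q * v q = z * v p := congrFun hAv p
  by_cases h₀ : (fun j => v (0, j)) = 0
  · right
    refine (Matrix.mem_spectrum_iff_exists_mulVec_eq_smul _ z).2
      ⟨v ∘ Prod.map Fin.succ id, fun h => hv ?_, funext fun p => ?_⟩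
    · ext ⟨i, j⟩
      cases i using Fin.cases with
      | zero => exact congrFun h₀ j
      | succ i => exact congrFun h (i, j)
    · have := hrow (p.1.succ, p.2)
      rw [Fin.sum_prod_succ] at this
      simpa [mulVec, dotProduct, Prod.map, show ∀ j, v (0, j) = 0 from congrFun h₀] using this
  · left
    refine (Matrix.mem_spectrum_iff_exists_mulVec_eq_smul _ z).2
      ⟨fun j => v (0, j), h₀, funext fun i => ?_⟩
    have := hrow (0, i)
    rw [Fin.sum_prod_succ] at this
    have hoff (q : Fin k × ι) : A (0, i) (q.1.succ, q.2) = 0 := hA i _ (Fin.succ_ne_zero _)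
    simpa [mulVec, dotProduct, hoff] using this

end Spectrum

theorem IsHurwitz.of_blockLowerTriangular {k : ℕ} {ι : Type*} [Fintype ι] [DecidableEq ι]
    {A : Matrix (Fin (k + 1) × ι) (Fin (k + 1) × ι) ℝ}
    (hA : ∀ i q, q.1 ≠ 0 → A (0, i) q = 0)
    (h₀ : IsHurwitz (A.submatrix (Prod.mk 0) (Prod.mk 0)))
    (h₁ : IsHurwitz (A.submatrix (Prod.map Fin.succ id) (Prod.map Fin.succ id))) :
    IsHurwitz A := by
  intro z hz
  have hA' : ∀ i q, q.1 ≠ 0 → A.map Complex.ofReal (0, i) q = 0 := by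
    simp +contextual [hA]
  rcases (A.map Complex.ofReal).spectrum_subset_union_of_blockLowerTriangular hA' hz with h | h
  · exact h₀ z (by rwa [← submatrix_map])
  · exact h₁ z (by rwa [← submatrix_map])

/-- For an eigenvector `v = a + i b`, `Re (v* A v) = aᵀ A a + bᵀ A b` while `v* A v = z ‖v‖²`. -/
theorem IsHurwitz.of_dotProduct_mulVec_neg {m : Type*} [Fintype m] [DecidableEq m]
    {A : Matrix m m ℝ}
    (hA : ∀ u ≠ 0, u ⬝ᵥ (A *ᵥ u) < 0) : IsHurwitz A := by
  intro z hz
  obtain ⟨v, hv, hAv⟩ := ((A.map Complex.ofReal).mem_spectrum_iff_exists_mulVec_eq_smul z).1 hz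
  set a : m → ℝ := fun p => (v p).re
  set b : m → ℝ := fun p => (v p).im
  have hquad : (star v ⬝ᵥ (A.map Complex.ofReal *ᵥ v)).re = a ⬝ᵥ (A *ᵥ a) + b ⬝ᵥ (A *ᵥ b) := by
    simp only [dotProduct, mulVec, Finset.mul_sum, Complex.re_sum, ← Finset.sum_add_distrib]
    refine Finset.sum_congr rfl fun p _ => Finset.sum_congr rfl fun q _ => ?_
    simp [a, b, Complex.mul_re, Complex.mul_im]
  have hnorm : (star v ⬝ᵥ (z • v)).re = z.re * (a ⬝ᵥ a + b ⬝ᵥ b) := by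
    simp only [dotProduct, Finset.mul_sum, Complex.re_sum, ← Finset.sum_add_distrib]
    refine Finset.sum_congr rfl fun p _ => ?_
    simp [a, b, Complex.mul_re, Complex.mul_im]
    ring
  have hnonpos (u : m → ℝ) : u ⬝ᵥ (A *ᵥ u) ≤ 0 := by
    rcases eq_or_ne u 0 with rfl | hu
    · simp
    · exact (hA u hu).le
  have hab : a ≠ 0 ∨ b ≠ 0 := by
    by_contra! h
    exact hv (funext fun p => Complex.ext (congrFun h.1 p) (congrFun h.2 p))
  have hneg : a ⬝ᵥ (A *ᵥ a) + b ⬝ᵥ (A *ᵥ b) < 0 := by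
    rcases hab with ha | hb
    · linarith [hA a ha, hnonpos b]
    · linarith [hnonpos a, hA b hb]
  rw [← hquad, hAv, hnorm] at hneg
  exact neg_of_mul_neg_left hneg
    (add_nonneg (dotProduct_self_star_nonneg a) (dotProduct_self_star_nonneg b))

section QuadraticForm

variable {α ι : Type*} [Fintype α] [Fintype ι]

theorem eucNorm_sq (u : α → ℝ) : eucNorm u ^ 2 = u ⬝ᵥ u := by
  rw [eucNorm, EuclideanSpace.norm_eq, Real.sq_sqrt (Finset.sum_nonneg fun _ _ => sq_nonneg _)]
  simp [dotProduct, sq]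

theorem eucNorm_pos {u : α → ℝ} (hu : u ≠ 0) : 0 < eucNorm u := by
  simpa [eucNorm] using hu

theorem dotProduct_mulVec_le_opNorm [DecidableEq α] (B : Matrix α α ℝ) (u : α → ℝ) :
    u ⬝ᵥ (B *ᵥ u) ≤ opNorm B * eucNorm u ^ 2 := by
  set e := (WithLp.equiv 2 (α → ℝ)).symm
  have hinner : u ⬝ᵥ (B *ᵥ u) = inner ℝ (e u) (e (B *ᵥ u)) := by
    simp [e, dotProduct, PiLp.inner_apply, mul_comm]
  calc u ⬝ᵥ (B *ᵥ u) ≤ ‖e u‖ * ‖e (B *ᵥ u)‖ := hinner ▸ real_inner_le_norm _ _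
    _ ≤ ‖e u‖ * (opNorm B * ‖e u‖) :=
        mul_le_mul_of_nonneg_left ((Matrix.toEuclideanLin B).toContinuousLinearMap.le_opNorm _)
          (norm_nonneg _)
    _ = opNorm B * eucNorm u ^ 2 := by rw [eucNorm]; ring

theorem dotProduct_add_transpose_mulVec (B : Matrix α α ℝ) (u : α → ℝ) :
    u ⬝ᵥ ((B + Bᵀ) *ᵥ u) = 2 * (u ⬝ᵥ (B *ᵥ u)) := by
  rw [add_mulVec, dotProduct_add, dotProduct_mulVec u Bᵀ, vecMul_transpose, dotProduct_comm]
  ring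

theorem le_dotProduct_kronecker_one_mulVec [DecidableEq ι] {L : Matrix α α ℝ} {μ : ℝ}
    (hL : ∀ v, μ * eucNorm v ^ 2 ≤ v ⬝ᵥ (L *ᵥ v)) (u : α × ι → ℝ) :
    μ * eucNorm u ^ 2 ≤ u ⬝ᵥ ((L ⊗ₖ (1 : Matrix ι ι ℝ)) *ᵥ u) := by
  have hsplit : u ⬝ᵥ ((L ⊗ₖ (1 : Matrix ι ι ℝ)) *ᵥ u) =
      ∑ j, (fun i => u (i, j)) ⬝ᵥ (L *ᵥ fun i => u (i, j)) := by
    simp only [dotProduct, mulVec, kroneckerMap_apply, one_apply, Fintype.sum_prod_type,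
      ite_mul, zero_mul, mul_ite, mul_zero, mul_one, Finset.sum_ite_eq, Finset.mem_univ,
      if_true, Finset.mul_sum]
    exact Finset.sum_comm
  have hnorm : eucNorm u ^ 2 = ∑ j, eucNorm (fun i => u (i, j)) ^ 2 := by
    simp only [eucNorm_sq, dotProduct, Fintype.sum_prod_type]
    exact Finset.sum_comm
  rw [hsplit, hnorm, Finset.mul_sum]
  exact Finset.sum_le_sum fun j _ => hL _

theorem dotProduct_sub_smul_mulVec_neg [DecidableEq α] {D P : Matrix α α ℝ} {γ μ : ℝ}
    (hP : ∀ u, μ * eucNorm u ^ 2 ≤ u ⬝ᵥ (P *ᵥ u)) (hγ : 0 ≤ γ)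
    (hγμ : opNorm (D + Dᵀ) / 2 < γ * μ) {u : α → ℝ} (hu : u ≠ 0) :
    u ⬝ᵥ ((D - γ • P) *ᵥ u) < 0 := by
  have hD := dotProduct_add_transpose_mulVec D u ▸ dotProduct_mulVec_le_opNorm (D + Dᵀ) u
  have hu₂ : 0 < eucNorm u ^ 2 := pow_pos (eucNorm_pos hu) 2
  rw [sub_mulVec, dotProduct_sub, smul_mulVec, dotProduct_smul, smul_eq_mul]
  nlinarith [mul_le_mul_of_nonneg_left (hP u) hγ]

end QuadraticForm

theorem bdiag_mul_kronecker_one_apply {k n : ℕ} (K : Fin k → Matrix (Fin n) (Fin n) ℝ)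
    (L : Matrix (Fin k) (Fin k) ℝ) (p q : Fin k × Fin n) :
    (bdiag K * (L ⊗ₖ (1 : Matrix (Fin n) (Fin n) ℝ))) p q = L p.1 q.1 * K p.1 p.2 q.2 := by
  simp [mul_apply, bdiag, one_apply, Fintype.sum_prod_type, mul_comm]

theorem stmt4_general {M n : ℕ} (L : Matrix (Fin (M + 2)) (Fin (M + 2)) ℝ)
    (E : Fin (M + 2) → Matrix (Fin n) (Fin n) ℝ)
    (hE1 : IsHurwitz (E 0))
    (γ μ : ℝ) (hμ : 0 < μ)
    (hLtilde : ∀ v : Fin (M + 1) → ℝ,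
      μ * eucNorm v ^ 2 ≤ v ⬝ᵥ ((L.submatrix Fin.succ Fin.succ) *ᵥ v))
    (hγ : opNorm (bdiag (fun i : Fin (M + 1) => E i.succ) +
      (bdiag (fun i : Fin (M + 1) => E i.succ))ᵀ) / (2 * μ) < γ) :
    IsHurwitz (bdiag E -
      bdiag (fun i => if i = 0 then (0 : Matrix (Fin n) (Fin n) ℝ) else γ • 1) *
        (L ⊗ₖ (1 : Matrix (Fin n) (Fin n) ℝ))) := by
  have hγ₀ : 0 ≤ γ := (div_nonneg (norm_nonneg _) (by positivity)).trans hγ.le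
  refine IsHurwitz.of_blockLowerTriangular ?_ ?_ ?_
  · intro i q hq
    simp [bdiag, bdiag_mul_kronecker_one_apply, Ne.symm hq]
  · convert hE1 using 1
    ext i j
    simp [bdiag, bdiag_mul_kronecker_one_apply]
  · have hsucc : (bdiag E -
        bdiag (fun i => if i = 0 then (0 : Matrix (Fin n) (Fin n) ℝ) else γ • 1) *
          (L ⊗ₖ (1 : Matrix (Fin n) (Fin n) ℝ))).submatrix (Prod.map Fin.succ id)
          (Prod.map Fin.succ id) =
        bdiag (fun i : Fin (M + 1) => E i.succ) -
          γ • (L.submatrix Fin.succ Fin.succ ⊗ₖ (1 : Matrix (Fin n) (Fin n) ℝ)) := by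
      ext ⟨i, i'⟩ ⟨j, j'⟩
      simp [bdiag, bdiag_mul_kronecker_one_apply, one_apply, mul_comm]
    rw [hsucc]
    refine IsHurwitz.of_dotProduct_mulVec_neg fun u hu =>
      dotProduct_sub_smul_mulVec_neg (le_dotProduct_kronecker_one_mulVec hLtilde) hγ₀ ?_ hu
    rw [div_lt_iff₀ (by positivity)] at hγ
    rw [div_lt_iff₀ two_pos]
    linarith

/-- Stability of the distributed observer error matrix
`blockdiag(E_i) − blockdiag(K_i)(L ⊗ I)` with `K_1 = 0`, `K_i = γI` (`i ≥ 2`),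
for `γ > ‖Ẽ + Ẽᵀ‖/(2μ)`. (Nodes are indexed by `Fin (M+2)`, node 1 being index `0`.) -/
theorem stmt4 {M n : ℕ} (L : Matrix (Fin (M + 2)) (Fin (M + 2)) ℝ)
    (hsym : L.IsSymm)
    (hoff : ∀ i j, i ≠ j → L i j ≤ 0)
    (hone : L *ᵥ (fun _ => (1 : ℝ)) = 0)
    (hirr : MatIrreducible L)
    (E : Fin (M + 2) → Matrix (Fin n) (Fin n) ℝ)
    (hE1 : IsHurwitz (E 0))
    (γ μ : ℝ) (hμ : 0 < μ)
    (hLtilde : ∀ v : Fin (M + 1) → ℝ,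
      μ * eucNorm v ^ 2 ≤ v ⬝ᵥ ((L.submatrix Fin.succ Fin.succ) *ᵥ v))
    (hγ : opNorm (bdiag (fun i : Fin (M + 1) => E i.succ) +
      (bdiag (fun i : Fin (M + 1) => E i.succ))ᵀ) / (2 * μ) < γ) :
    IsHurwitz (bdiag E -
      bdiag (fun i => if i = 0 then (0 : Matrix (Fin n) (Fin n) ℝ) else γ • 1) *
        (L ⊗ₖ (1 : Matrix (Fin n) (Fin n) ℝ))) :=
  stmt4_general L E hE1 γ μ hμ hLtilde hγ
end

section
/- Let A ∈ ℝ^{n×n}, B^m ∈ ℝ^{n×m}, B^p ∈ ℝ^{n×r}, C ∈ ℝ^{p×n}, and let E, F, L, H satisfy the decoupling conditions F = (I − H C) B^m, (I − H C) B^p = 0, and E = (I − H C) A − (L − E H) C. Let x, z : ℝ → ℝ^n be differentiable, let u : ℝ → ℝ^m, w : ℝ → ℝ^r, c : ℝ → ℝ^n be functions, and suppose that for all t: ẋ(t) = A x(t) + B^m u(t) + B^p w(t) and ż(t) = E z(t) + F u(t) + L C x(t) + c(t). Define the estimate x̂(t) := z(t) + H C x(t) and the error e(t) := x(t) − x̂(t).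 Then for all t, e is differentiable with ė(t) = E e(t) − c(t); in particular the error dynamics is decoupled from x, u, and w. -/
open Matrix

/-! Differentiating `e = x − (z + HCx)` gives `ė = (1 − HC) ẋ − ż`. The matrix `1 − HC`
annihilates `Bᵖ`, turns `Bᵐ` into `F`, and the condition on `E` says exactly
`(1 − HC) A − L C = E (1 − HC)`, so everything except `E e − c` cancels. -/

theorem HasDerivAt.matrix_mulVec {𝕜 ι κ : Type*} [NontriviallyNormedField 𝕜] [Fintype ι]
    [Fintype κ] (M : Matrix ι κ 𝕜) {f : 𝕜 → κ → 𝕜} {f' : κ → 𝕜} {t : 𝕜}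
    (hf : HasDerivAt f f' t) : HasDerivAt (fun s => M *ᵥ f s) (M *ᵥ f') t := by
  refine hasDerivAt_pi.2 fun i => ?_
  simp only [mulVec, dotProduct]
  exact HasDerivAt.fun_sum fun j _ => (hasDerivAt_pi.1 hf j).const_mul (M i j)

theorem intertwine_of_decoupling {R ι κ : Type*} [Ring R] [Fintype ι] [DecidableEq ι] [Fintype κ]
    {A E : Matrix ι ι R} {C : Matrix κ ι R} {L H : Matrix ι κ R}
    (hE : E = (1 - H * C) * A - (L - E * H) * C) :
    (1 - H * C) * A - L * C = E * (1 - H * C) := by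
  rw [mul_sub, mul_one]
  nth_rewrite 1 [hE]
  simp only [Matrix.sub_mul, Matrix.one_mul, Matrix.mul_assoc]
  abel

theorem observer_error_deriv_eq {R ι κ μ ρ : Type*} [Ring R] [Fintype ι] [DecidableEq ι]
    [Fintype κ] [Fintype μ] [Fintype ρ] {A E : Matrix ι ι R} {Bm F : Matrix ι μ R}
    {Bp : Matrix ι ρ R} {C : Matrix κ ι R} {L H : Matrix ι κ R}
    (hF : F = (1 - H * C) * Bm) (hBp : (1 - H * C) * Bp = 0)
    (hE : E = (1 - H * C) * A - (L - E * H) * C)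
    (x z : ι → R) (u : μ → R) (w : ρ → R) (c : ι → R) :
    (A *ᵥ x + Bm *ᵥ u + Bp *ᵥ w) -
        (E *ᵥ z + F *ᵥ u + L *ᵥ (C *ᵥ x) + c + H *ᵥ (C *ᵥ (A *ᵥ x + Bm *ᵥ u + Bp *ᵥ w))) =
      E *ᵥ (x - (z + H *ᵥ (C *ᵥ x))) - c := by
  set P := 1 - H * C
  have hproj : ∀ v, v - H *ᵥ (C *ᵥ v) = P *ᵥ v := fun v => by
    simp only [P, sub_mulVec, one_mulVec, mulVec_mulVec]
  have hstate : P *ᵥ (A *ᵥ x + Bm *ᵥ u + Bp *ᵥ w) = (P * A) *ᵥ x + F *ᵥ u := by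
    simp only [mulVec_add, mulVec_mulVec, hF, hBp, zero_mulVec, add_zero]
  have herr : E *ᵥ (x - (z + H *ᵥ (C *ᵥ x))) = (P * A - L * C) *ᵥ x - E *ᵥ z := by
    rw [intertwine_of_decoupling hE, ← mulVec_mulVec, ← hproj]
    simp only [mulVec_sub, mulVec_add]
    abel
  calc _ = P *ᵥ (A *ᵥ x + Bm *ᵥ u + Bp *ᵥ w) - (E *ᵥ z + F *ᵥ u + L *ᵥ (C *ᵥ x) + c) := by
        rw [← hproj]; abel
    _ = _ := by rw [hstate, herr, sub_mulVec, mulVec_mulVec]; abel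

/-- Error-dynamics decoupling for a single node of the unknown-input observer:
if the decoupling conditions hold, then the error `e = x − (z + HCx)` satisfies
`ė = E e − c`, independently of `x`, `u` and `w`. -/
theorem stmt5 {n m r p : ℕ} (A : Matrix (Fin n) (Fin n) ℝ)
    (Bm : Matrix (Fin n) (Fin m) ℝ) (Bp : Matrix (Fin n) (Fin r) ℝ)
    (C : Matrix (Fin p) (Fin n) ℝ)
    (E : Matrix (Fin n) (Fin n) ℝ) (F : Matrix (Fin n) (Fin m) ℝ)
    (L H : Matrix (Fin n) (Fin p) ℝ)
    (hF : F = (1 - H * C) * Bm)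
    (hBp : (1 - H * C) * Bp = 0)
    (hE : E = (1 - H * C) * A - (L - E * H) * C)
    (x z : ℝ → Fin n → ℝ)
    (u : ℝ → Fin m → ℝ) (w : ℝ → Fin r → ℝ) (c : ℝ → Fin n → ℝ)
    (hx : ∀ t, HasDerivAt x (A *ᵥ x t + Bm *ᵥ u t + Bp *ᵥ w t) t)
    (hz : ∀ t, HasDerivAt z (E *ᵥ z t + F *ᵥ u t + L *ᵥ (C *ᵥ x t) + c t) t) :
    ∀ t, HasDerivAt (fun s => x s - (z s + H *ᵥ (C *ᵥ x s)))
      (E *ᵥ (x t - (z t + H *ᵥ (C *ᵥ x t))) - c t) t := by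
  intro t
  rw [← observer_error_deriv_eq hF hBp hE]
  exact (hx t).sub ((hz t).add (((hx t).matrix_mulVec C).matrix_mulVec H))
end

section
/- Let A ∈ ℝ^{n×n}, B^m ∈ ℝ^{n×m}, B^p ∈ ℝ^{n×r}, C ∈ ℝ^{p×n}, and let U ∈ ℝ^{m×N}, W ∈ ℝ^{r×N}, X ∈ ℝ^{n×N} be data matrices such that the stacked matrix [U; W; X] has full row rank m + r + n. Define Ẋ := A X + B^m U + B^p W, Y := C X, Ẏ := C Ẋ. Let u : ℝ → ℝ^m, y, ẏ : ℝ → ℝ^p, x, ẋ : ℝ → ℝ^n be arbitrary functions. Then the following are equivalent: (a) for every t ∈ ℝ, the stacked vector [u(t); y(t); ẏ(t); x(t); ẋ(t)] lies in the column space of the stacked matrix [U; Y; Ẏ; X; Ẋ]; (b) there exists a function w : ℝ → ℝ^r such that for every t ∈ ℝ: ẋ(t) = A x(t) + B^m u(t) + B^p w(t), y(t) = C x(t), and ẏ(t) = C ẋ(t). -/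
open Matrix

/-- Consistency of offline and online trajectories: an input/output/state trajectory
lies pointwise in the column space of the stacked data matrix `[U; Y; Ẏ; X; Ẋ]`
(i.e. there is a common coefficient vector `g` realizing all five components)
if and only if it is a trajectory of the system for some unknown input `w`. -/
theorem stmt7 {n m r pdim N : ℕ}
    (A : Matrix (Fin n) (Fin n) ℝ)
    (Bm : Matrix (Fin n) (Fin m) ℝ) (Bp : Matrix (Fin n) (Fin r) ℝ)
    (C : Matrix (Fin pdim) (Fin n) ℝ)
    (U : Matrix (Fin m) (Fin N) ℝ) (W : Matrix (Fin r) (Fin N) ℝ)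
    (X : Matrix (Fin n) (Fin N) ℝ)
    (hrank : (Matrix.fromRows U (Matrix.fromRows W X)).rank = m + r + n)
    (Xdot : Matrix (Fin n) (Fin N) ℝ) (hXdot : Xdot = A * X + Bm * U + Bp * W)
    (Y : Matrix (Fin pdim) (Fin N) ℝ) (hY : Y = C * X)
    (Ydot : Matrix (Fin pdim) (Fin N) ℝ) (hYdot : Ydot = C * Xdot)
    (u : ℝ → Fin m → ℝ) (y ydot : ℝ → Fin pdim → ℝ) (x xdot : ℝ → Fin n → ℝ) :
    (∀ t : ℝ, ∃ g : Fin N → ℝ,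
        U *ᵥ g = u t ∧ Y *ᵥ g = y t ∧ Ydot *ᵥ g = ydot t ∧
          X *ᵥ g = x t ∧ Xdot *ᵥ g = xdot t) ↔
      (∃ w : ℝ → Fin r → ℝ, ∀ t : ℝ,
        xdot t = A *ᵥ x t + Bm *ᵥ u t + Bp *ᵥ w t ∧
          y t = C *ᵥ x t ∧ ydot t = C *ᵥ xdot t) := by
  constructor
  · intro h
    refine ⟨fun t => W *ᵥ (h t).choose, fun t => ?_⟩
    obtain ⟨hU, hY', hYd, hX, hXd⟩ := (h t).choose_spec
    set g := (h t).choose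
    refine ⟨?_, ?_, ?_⟩
    · have hkey : Xdot *ᵥ g = A *ᵥ (X *ᵥ g) + Bm *ᵥ (U *ᵥ g) + Bp *ᵥ (W *ᵥ g) := by
        rw [hXdot]; simp [Matrix.add_mulVec, Matrix.mulVec_mulVec]
      rw [hXd, hX, hU] at hkey
      exact hkey
    · have hkey : Y *ᵥ g = C *ᵥ (X *ᵥ g) := by rw [hY, Matrix.mulVec_mulVec]
      rw [hY', hX] at hkey; exact hkey
    · have hkey : Ydot *ᵥ g = C *ᵥ (Xdot *ᵥ g) := by rw [hYdot, Matrix.mulVec_mulVec]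
      rw [hYd, hXd] at hkey; exact hkey
  · rintro ⟨w, hw⟩ t
    obtain ⟨h1, h2, h3⟩ := hw t
    -- surjectivity of the stacked map
    have hsurj : Function.Surjective
        (Matrix.fromRows U (Matrix.fromRows W X)).mulVecLin := by
      rw [← LinearMap.range_eq_top]
      apply Submodule.eq_top_of_finrank_eq
      rw [← Matrix.rank, hrank]
      simp [Module.finrank_pi]
      ring
    obtain ⟨g, hg⟩ := hsurj (Sum.elim (u t) (Sum.elim (w t) (x t)))
    rw [Matrix.mulVecLin_apply, Matrix.fromRows_mulVec, Matrix.fromRows_mulVec] at hg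
    have hU : U *ᵥ g = u t := funext fun i => congrFun hg (Sum.inl i)
    have hW : W *ᵥ g = w t := funext fun i => congrFun hg (Sum.inr (Sum.inl i))
    have hX : X *ᵥ g = x t := funext fun i => congrFun hg (Sum.inr (Sum.inr i))
    have hXd : Xdot *ᵥ g = xdot t := by
      rw [hXdot, h1, ← hU, ← hW, ← hX]
      simp [Matrix.add_mulVec, Matrix.mulVec_mulVec]
    refine ⟨g, hU, ?_, ?_, hX, hXd⟩
    · rw [hY, h2, ← hX, Matrix.mulVec_mulVec]
    · rw [hYdot, h3, ← hXd, Matrix.mulVec_mulVec]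
end

section
/- Let A ∈ ℝ^{n×n}, B^m ∈ ℝ^{n×m}, B^p ∈ ℝ^{n×r}, C ∈ ℝ^{p×n}, and let U ∈ ℝ^{m×N}, W ∈ ℝ^{r×N}, X ∈ ℝ^{n×N} be data matrices such that [U; W; X] has full row rank m + r + n. Define Ẋ := A X + B^m U + B^p W and Ẏ := C Ẋ. Then rank([U; Ẏ; X]) = rank([U; X; Ẋ]) if and only if rank(C B^p) = rank(B^p). -/
/-!
With `V = [U; X]`, both `Ẏ` and `Ẋ` have the form `P V + Q W`, with `Q = C Bᵖ` resp.
`Q = Bᵖ`, and `[V; P V + Q W] = [[1, 0], [P, Q]] [V; W]`. Multiplying on the right by the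
full-row-rank matrix `[V; W]` preserves rank, and the block lower triangular factor has rank
`m + n + rank Q`. Hence the two data ranks are `m + n + rank (C Bᵖ)` and `m + n + rank Bᵖ`.
-/

open Matrix Module

theorem Submodule.finrank_prod {K V W : Type*} [Field K] [AddCommGroup V] [Module K V]
    [AddCommGroup W] [Module K W] [FiniteDimensional K V] [FiniteDimensional K W]
    (S : Submodule K V) (T : Submodule K W) :
    finrank K (S.prod T) = finrank K S + finrank K T := by
  have hinj : Function.Injective (S.subtype.prodMap T.subtype) :=
    Prod.map_injective.mpr ⟨S.injective_subtype, T.injective_subtype⟩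
  calc finrank K (S.prod T)
      = finrank K (LinearMap.range (S.subtype.prodMap T.subtype)) := by
        rw [LinearMap.range_prodMap, Submodule.range_subtype, Submodule.range_subtype]
    _ = finrank K (S × T) := LinearMap.finrank_range_of_inj hinj
    _ = finrank K S + finrank K T := Module.finrank_prod

namespace Matrix

variable {K : Type*} [Field K] {k l m n p q : Type*}

theorem rank_fromRows_assoc [Fintype n] (A : Matrix m n K) (B : Matrix p n K)
    (C : Matrix q n K) :
    (fromRows (fromRows A B) C).rank = (fromRows A (fromRows B C)).rank := by
  rw [← rank_submatrix _ (Equiv.sumAssoc m p q) (Equiv.refl n)]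
  congr 1
  ext ((i | i) | i) j <;> rfl

theorem rank_fromRows_right_comm [Fintype n] (A : Matrix m n K) (B : Matrix p n K)
    (C : Matrix q n K) :
    (fromRows (fromRows A B) C).rank = (fromRows (fromRows A C) B).rank := by
  rw [← rank_submatrix _ ((Equiv.sumAssoc m p q).trans
    ((Equiv.sumCongr (Equiv.refl m) (Equiv.sumComm p q)).trans (Equiv.sumAssoc m q p).symm))
    (Equiv.refl n)]
  congr 1
  ext ((i | i) | i) j <;> rfl

theorem rank_mul_of_rank_eq_card [Fintype k] [Fintype n] (M : Matrix l k K) (Z : Matrix k n K)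
    (hZ : Z.rank = Fintype.card k) : (M * Z).rank = M.rank := by
  have hsurj : LinearMap.range Z.mulVecLin = ⊤ := by
    apply Submodule.eq_top_of_finrank_eq
    rw [← rank, hZ, finrank_pi]
  rw [rank, mulVecLin_mul, LinearMap.range_comp_of_range_eq_top _ hsurj, rank]

theorem rank_fromBlocks_zero_zero [Fintype m] [Fintype n] [Fintype p] [Fintype q]
    (A : Matrix m n K) (D : Matrix p q K) :
    (fromBlocks A 0 0 D).rank = A.rank + D.rank := by
  have key : (fromBlocks A 0 0 D).mulVecLin =
      (LinearEquiv.sumArrowLequivProdArrow m p K K).symm.toLinearMap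
        ∘ₗ A.mulVecLin.prodMap D.mulVecLin
        ∘ₗ (LinearEquiv.sumArrowLequivProdArrow n q K K).toLinearMap := by
    ext x (i | i) <;>
      simp [fromBlocks_mulVec, LinearEquiv.sumArrowLequivProdArrow, Equiv.sumArrowEquivProdArrow]
  rw [rank, key, LinearMap.range_comp, LinearMap.range_comp, LinearEquiv.range,
    Submodule.map_top, LinearEquiv.finrank_map_eq, LinearMap.range_prodMap,
    Submodule.finrank_prod, rank, rank]

theorem rank_fromBlocks_one_zero [Fintype m] [DecidableEq m] [Fintype p] [DecidableEq p]
    [Fintype q] (P : Matrix p m K) (Q : Matrix p q K) :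
    (fromBlocks (1 : Matrix m m K) 0 P Q).rank = Fintype.card m + Q.rank := by
  have hfactor : fromBlocks (1 : Matrix m m K) 0 P Q =
      fromBlocks 1 0 P (1 : Matrix p p K) * fromBlocks (1 : Matrix m m K) 0 0 Q := by
    simp [fromBlocks_multiply]
  have hdet : IsUnit (fromBlocks (1 : Matrix m m K) 0 P (1 : Matrix p p K)).det := by
    simp
  rw [hfactor, rank_mul_eq_right_of_isUnit_det _ _ hdet, rank_fromBlocks_zero_zero, rank_one]

theorem rank_fromRows_add_mul [Fintype k] [DecidableEq k] [Fintype p] [DecidableEq p]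
    [Fintype q] [Fintype n]
    (V : Matrix k n K) (W : Matrix q n K) (P : Matrix p k K) (Q : Matrix p q K)
    (h : (fromRows V W).rank = Fintype.card k + Fintype.card q) :
    (fromRows V (P * V + Q * W)).rank = Fintype.card k + Q.rank := by
  have hfactor : fromRows V (P * V + Q * W) = fromBlocks 1 0 P Q * fromRows V W := by
    simp [fromBlocks_mul_fromRows]
  rw [hfactor, rank_mul_of_rank_eq_card _ _ (by rw [h, Fintype.card_sum]),
    rank_fromBlocks_one_zero]

end Matrix

/-- Data-driven check of the UIO solvability condition:
`rank [U; Ẏ; X] = rank [U; X; Ẋ]` iff `rank (C Bᵖ) = rank Bᵖ`. -/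
theorem stmt8 {n m r pdim N : ℕ}
    (A : Matrix (Fin n) (Fin n) ℝ)
    (Bm : Matrix (Fin n) (Fin m) ℝ) (Bp : Matrix (Fin n) (Fin r) ℝ)
    (C : Matrix (Fin pdim) (Fin n) ℝ)
    (U : Matrix (Fin m) (Fin N) ℝ) (W : Matrix (Fin r) (Fin N) ℝ)
    (X : Matrix (Fin n) (Fin N) ℝ)
    (hrank : (Matrix.fromRows U (Matrix.fromRows W X)).rank = m + r + n)
    (Xdot : Matrix (Fin n) (Fin N) ℝ) (hXdot : Xdot = A * X + Bm * U + Bp * W)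
    (Ydot : Matrix (Fin pdim) (Fin N) ℝ) (hYdot : Ydot = C * Xdot) :
    (Matrix.fromRows U (Matrix.fromRows Ydot X)).rank =
        (Matrix.fromRows U (Matrix.fromRows X Xdot)).rank ↔
      (C * Bp).rank = Bp.rank := by
  set V := fromRows U X
  have hVW : (fromRows V W).rank = Fintype.card (Fin m ⊕ Fin n) + Fintype.card (Fin r) := by
    rw [rank_fromRows_right_comm, rank_fromRows_assoc, hrank]
    simp only [Fintype.card_sum, Fintype.card_fin]
    omega
  have hXdot' : Xdot = fromCols Bm A * V + Bp * W := by
    rw [hXdot, fromCols_mul_fromRows]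
    abel
  have hYdot' : Ydot = fromCols (C * Bm) (C * A) * V + (C * Bp) * W := by
    rw [hYdot, hXdot', Matrix.mul_add, ← Matrix.mul_assoc, ← Matrix.mul_assoc, mul_fromCols]
  have hY : (fromRows U (fromRows Ydot X)).rank = m + n + (C * Bp).rank := by
    rw [← rank_fromRows_assoc, rank_fromRows_right_comm, hYdot',
      rank_fromRows_add_mul _ _ _ _ hVW]
    simp
  have hX : (fromRows U (fromRows X Xdot)).rank = m + n + Bp.rank := by
    rw [← rank_fromRows_assoc, hXdot', rank_fromRows_add_mul _ _ _ _ hVW]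
    simp
  rw [hY, hX]
  omega
end

section
/- Let A ∈ ℝ^{n×n}, B^m ∈ ℝ^{n×m}, B^p ∈ ℝ^{n×r} with rank(B^p) = r, C ∈ ℝ^{p×n}, and let U ∈ ℝ^{m×N}, W ∈ ℝ^{r×N}, X ∈ ℝ^{n×N} be data matrices such that [U; W; X] has full row rank m + r + n. Define Ẋ := A X + B^m U + B^p W and Y := C X. Let H ∈ ℝ^{n×p} satisfy H C B^p = B^p and rank(H) = r. Then the following are equivalent: (a) for every s ∈ ℂ with Re(s) ≥ 0, the rank over ℂ of [s X − Ẋ; U; Y] equals n + m + r; (b) the pair ((I − H C) A, C) is detectable. -/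
/-!
Along the trajectories, `[sX - Ẋ; U; Y] = T(s) [U; W; X]` with
`T(s) = [-Bm, -Bp, sI - A; I, 0, 0; 0, 0, C]`, and `[U; W; X]` has a right inverse, so both sides
have the same rank: condition (a) says that `T(s)` is injective, i.e. that `(A, Bp, C)` has no
invariant zero in the closed right half-plane. From `HCBp = Bp` and `rank H = rank Bp` we get
`range H = range Bp`, hence `H = Bp G`; then a vector `x ∈ ker C` satisfies `(I - HC)Ax = sx`
exactly when `Ax + Bp w = sx` for some `w`, so these invariant zeros are precisely the unobservable
modes of `((I - HC)A, C)`.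
-/

open Matrix

/-- PBH detectability of a pair `(M, C)` of real matrices. -/
def Detectable {n p : ℕ} (M : Matrix (Fin n) (Fin n) ℝ)
    (C : Matrix (Fin p) (Fin n) ℝ) : Prop :=
  ∀ s : ℂ, 0 ≤ s.re →
    (Matrix.fromRows (s • (1 : Matrix (Fin n) (Fin n) ℂ) - M.map Complex.ofReal)
      (C.map Complex.ofReal)).rank = n

namespace Matrix

section Field

variable {K : Type*} [Field K] {m n : Type*}

theorem rank_eq_card_width_iff_ker_eq_bot [Fintype n] {A : Matrix m n K} :
    A.rank = Fintype.card n ↔ LinearMap.ker A.mulVecLin = ⊥ := by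
  rw [← Submodule.finrank_eq_zero, rank]
  have := LinearMap.finrank_range_add_finrank_ker A.mulVecLin
  rw [Module.finrank_fintype_fun_eq_card] at this
  omega

theorem exists_mul_eq_one_of_rank_eq_card_height [Fintype m] [Fintype n] [DecidableEq m]
    [DecidableEq n] {A : Matrix m n K} (h : A.rank = Fintype.card m) :
    ∃ B : Matrix n m K, A * B = 1 := by
  have hrange : LinearMap.range A.mulVecLin = ⊤ :=
    Submodule.eq_top_of_finrank_eq (by rw [← rank, h, Module.finrank_fintype_fun_eq_card])
  obtain ⟨g, hg⟩ := A.mulVecLin.exists_rightInverse_of_surjective hrange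
  refine ⟨LinearMap.toMatrix' g, ?_⟩
  calc A * LinearMap.toMatrix' g = LinearMap.toMatrix' (A.mulVecLin ∘ₗ g) := by
        rw [LinearMap.toMatrix'_comp, ← toLin'_apply', LinearMap.toMatrix'_toLin']
    _ = 1 := by rw [hg, LinearMap.toMatrix'_id]

theorem exists_mul_eq_one_of_rank_eq_card_width [Fintype m] [Fintype n] [DecidableEq m]
    [DecidableEq n] {A : Matrix m n K} (h : A.rank = Fintype.card n) :
    ∃ B : Matrix n m K, B * A = 1 := by
  obtain ⟨B, hB⟩ := exists_mul_eq_one_of_rank_eq_card_height (A := Aᵀ) (by rwa [rank_transpose])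
  exact ⟨Bᵀ, by rw [← transpose_transpose A, ← transpose_mul, hB, transpose_one]⟩

theorem eq_mul_mul_of_mul_mul_eq {p r : Type*} [Fintype n] [Fintype p] [Fintype r]
    [DecidableEq r] {H : Matrix n p K} {C : Matrix p n K} {B : Matrix n r K} {L : Matrix r n K}
    (hH : H * C * B = B) (hrank : H.rank = B.rank) (hL : L * B = 1) : H = B * (L * H) := by
  have hle : LinearMap.range B.mulVecLin ≤ LinearMap.range H.mulVecLin := by
    rintro _ ⟨v, rfl⟩
    exact ⟨(C * B) *ᵥ v, by simp only [coe_mulVecLin, mulVec_mulVec, ← Matrix.mul_assoc, hH]⟩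
  have hrange := Submodule.eq_of_le_of_finrank_le hle hrank.le
  refine ext_iff_mulVec.2 fun v => ?_
  obtain ⟨z, hz⟩ : H *ᵥ v ∈ LinearMap.range B.mulVecLin := hrange ▸ ⟨v, rfl⟩
  rw [coe_mulVecLin] at hz
  rw [← mulVec_mulVec, ← mulVec_mulVec, ← hz, mulVec_mulVec (N := B), hL, one_mulVec]

end Field

theorem rank_mul_eq_left_of_mul_eq_one {R : Type*} [CommSemiring R] [StrongRankCondition R]
    {l m n : Type*} [Fintype m] [Fintype n] [DecidableEq m] (A : Matrix l m R) {B : Matrix m n R}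
    {B' : Matrix n m R} (h : B * B' = 1) : (A * B).rank = A.rank :=
  le_antisymm (rank_mul_le_left A B) <| by
    simpa only [Matrix.mul_assoc, h, Matrix.mul_one] using rank_mul_le_left (A * B) B'

end Matrix

section DataPencil

variable {K : Type*} [CommRing K] {n m r p : Type*} [Fintype n] [Fintype m] [Fintype r]
  [DecidableEq n] [DecidableEq m]

def dataPencil (s : K) (A : Matrix n n K) (Bm : Matrix n m K) (Bp : Matrix n r K)
    (C : Matrix p n K) : Matrix (n ⊕ (m ⊕ p)) (m ⊕ (r ⊕ n)) K :=
  fromRows (fromCols (-Bm) (fromCols (-Bp) (s • 1 - A)))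
    (fromRows (fromCols 1 0) (fromCols 0 (fromCols 0 C)))

variable {s : K} {A : Matrix n n K} {Bm : Matrix n m K} {Bp : Matrix n r K} {C : Matrix p n K}

theorem fromRows_data_eq_dataPencil_mul {N : Type*} {U : Matrix m N K} {W : Matrix r N K}
    {X Xdot : Matrix n N K} {Y : Matrix p N K} (hXdot : Xdot = A * X + Bm * U + Bp * W)
    (hY : Y = C * X) :
    fromRows (s • X - Xdot) (fromRows U Y) =
      dataPencil s A Bm Bp C * fromRows U (fromRows W X) := by
  simp only [dataPencil, fromRows_mul, fromCols_mul_fromRows, hXdot, hY, Matrix.sub_mul,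
    Matrix.smul_mul, Matrix.one_mul, Matrix.neg_mul, Matrix.zero_mul, add_zero, zero_add]
  congr 1
  abel

theorem dataPencil_mulVec_sumElim (u : m → K) (w : r → K) (x : n → K) :
    dataPencil s A Bm Bp C *ᵥ Sum.elim u (Sum.elim w x) =
      Sum.elim (s • x - A *ᵥ x - Bm *ᵥ u - Bp *ᵥ w) (Sum.elim u (C *ᵥ x)) := by
  simp only [dataPencil, fromRows_mulVec, fromCols_mulVec_sumElim, sub_mulVec, smul_mulVec,
    one_mulVec, neg_mulVec, zero_mulVec, add_zero, zero_add]
  congr 1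
  abel

theorem dataPencil_mulVec_sumElim_eq_zero_iff {u : m → K} {w : r → K} {x : n → K} :
    dataPencil s A Bm Bp C *ᵥ Sum.elim u (Sum.elim w x) = 0 ↔
      u = 0 ∧ C *ᵥ x = 0 ∧ A *ᵥ x + Bp *ᵥ w = s • x := by
  rw [dataPencil_mulVec_sumElim, ← Sum.elim_zero_zero, Sum.elim_eq_iff, ← Sum.elim_zero_zero,
    Sum.elim_eq_iff]
  constructor
  · rintro ⟨hx, rfl, hCx⟩
    rw [mulVec_zero, sub_zero, sub_sub, sub_eq_zero] at hx
    exact ⟨rfl, hCx, hx.symm⟩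
  · rintro ⟨rfl, hCx, hx⟩
    exact ⟨by rw [mulVec_zero, sub_zero, sub_sub, hx, sub_self], rfl, hCx⟩

theorem ker_dataPencil_eq_bot_iff (hBp : LinearMap.ker Bp.mulVecLin = ⊥) :
    LinearMap.ker (dataPencil s A Bm Bp C).mulVecLin = ⊥ ↔
      ∀ x, C *ᵥ x = 0 → (∃ w, A *ᵥ x + Bp *ᵥ w = s • x) → x = 0 := by
  rw [ker_mulVecLin_eq_bot_iff]
  constructor
  · rintro hker x hCx ⟨w, hx⟩
    have hv := hker _ (dataPencil_mulVec_sumElim_eq_zero_iff.2 ⟨rfl, hCx, hx⟩)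
    funext i
    exact congrFun hv (Sum.inr (Sum.inr i))
  · intro h v hv
    obtain ⟨u, w, x, rfl⟩ : ∃ u w x, v = Sum.elim u (Sum.elim w x) :=
      ⟨_, _, _, by ext (i | i | i) <;> rfl⟩
    obtain ⟨rfl, hCx, hx⟩ := dataPencil_mulVec_sumElim_eq_zero_iff.1 hv
    obtain rfl := h x hCx ⟨w, hx⟩
    obtain rfl : w = 0 := ker_mulVecLin_eq_bot_iff.1 hBp w (by simpa using hx)
    simp only [Sum.elim_zero_zero]

theorem one_sub_mul_mul_mulVec_eq_smul_iff [Fintype p] {H : Matrix n p K} {G : Matrix r p K}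
    (hH : H * C * Bp = Bp) (hG : H = Bp * G) {x : n → K} (hCx : C *ᵥ x = 0) :
    ((1 - H * C) * A) *ᵥ x = s • x ↔ ∃ w, A *ᵥ x + Bp *ᵥ w = s • x := by
  have hexp : ((1 - H * C) * A) *ᵥ x = A *ᵥ x - H *ᵥ (C *ᵥ (A *ᵥ x)) := by
    rw [Matrix.sub_mul, Matrix.one_mul, sub_mulVec, mulVec_mulVec, mulVec_mulVec,
      Matrix.mul_assoc]
  rw [hexp]
  constructor
  · intro hx
    refine ⟨-(G *ᵥ (C *ᵥ (A *ᵥ x))), ?_⟩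
    rw [mulVec_neg, mulVec_mulVec, ← hG, ← sub_eq_add_neg, hx]
  · rintro ⟨w, hx⟩
    have hHCAx : H *ᵥ (C *ᵥ (A *ᵥ x)) = -(Bp *ᵥ w) := by
      rw [eq_sub_of_add_eq hx, mulVec_sub, mulVec_smul, hCx, smul_zero, zero_sub, mulVec_neg,
        mulVec_mulVec, mulVec_mulVec, hH]
    rw [hHCAx, sub_neg_eq_add, hx]

theorem ker_fromRows_smul_one_sub_eq_bot_iff (M : Matrix n n K) :
    LinearMap.ker (fromRows (s • 1 - M) C).mulVecLin = ⊥ ↔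
      ∀ x, C *ᵥ x = 0 → M *ᵥ x = s • x → x = 0 := by
  simp only [ker_mulVecLin_eq_bot_iff, fromRows_mulVec, ← Sum.elim_zero_zero, Sum.elim_eq_iff,
    sub_mulVec, smul_mulVec, one_mulVec, sub_eq_zero, and_imp, eq_comm (a := s • _)]
  exact forall_congr' fun x => ⟨fun h hCx hx => h hx hCx, fun h hx hCx => h hCx hx⟩

end DataPencil

theorem rank_fromRows_data_eq_iff {K : Type*} [Field K] {n m r p N : Type*} [Fintype n]
    [Fintype m] [Fintype r] [Fintype p] [Fintype N] [DecidableEq n] [DecidableEq m]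
    [DecidableEq r] {A : Matrix n n K} {Bm : Matrix n m K} {Bp : Matrix n r K}
    {C : Matrix p n K} {H : Matrix n p K} {G : Matrix r p K} {U : Matrix m N K}
    {W : Matrix r N K} {X Xdot : Matrix n N K} {Y : Matrix p N K}
    {R : Matrix N (m ⊕ (r ⊕ n)) K} (hR : fromRows U (fromRows W X) * R = 1)
    (hBp : LinearMap.ker Bp.mulVecLin = ⊥) (hH : H * C * Bp = Bp) (hG : H = Bp * G)
    (hXdot : Xdot = A * X + Bm * U + Bp * W) (hY : Y = C * X) (s : K) :
    (fromRows (s • X - Xdot) (fromRows U Y)).rank =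
        Fintype.card n + Fintype.card m + Fintype.card r ↔
      (fromRows (s • 1 - (1 - H * C) * A) C).rank = Fintype.card n := by
  have hcard : Fintype.card n + Fintype.card m + Fintype.card r =
      Fintype.card (m ⊕ (r ⊕ n)) := by
    simp only [Fintype.card_sum]
    ring
  rw [fromRows_data_eq_dataPencil_mul hXdot hY, rank_mul_eq_left_of_mul_eq_one _ hR, hcard,
    rank_eq_card_width_iff_ker_eq_bot, rank_eq_card_width_iff_ker_eq_bot,
    ker_dataPencil_eq_bot_iff hBp, ker_fromRows_smul_one_sub_eq_bot_iff]
  exact forall_congr' fun x => imp_congr_right fun hCx =>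
    imp_congr_left (one_sub_mul_mul_mulVec_eq_smul_iff hH hG hCx).symm

/-- Data-driven detectability check: the rank condition on the stacked data matrix
`[sX − Ẋ; U; Y]` over the closed right half-plane is equivalent to detectability of
`((I − HC)A, C)`. -/
theorem stmt13 {n m r pdim N : ℕ}
    (A : Matrix (Fin n) (Fin n) ℝ)
    (Bm : Matrix (Fin n) (Fin m) ℝ) (Bp : Matrix (Fin n) (Fin r) ℝ)
    (hBp : Bp.rank = r)
    (C : Matrix (Fin pdim) (Fin n) ℝ)
    (U : Matrix (Fin m) (Fin N) ℝ) (W : Matrix (Fin r) (Fin N) ℝ)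
    (X : Matrix (Fin n) (Fin N) ℝ)
    (hrank : (Matrix.fromRows U (Matrix.fromRows W X)).rank = m + r + n)
    (Xdot : Matrix (Fin n) (Fin N) ℝ) (hXdot : Xdot = A * X + Bm * U + Bp * W)
    (Y : Matrix (Fin pdim) (Fin N) ℝ) (hY : Y = C * X)
    (H : Matrix (Fin n) (Fin pdim) ℝ)
    (hH : H * C * Bp = Bp) (hHrank : H.rank = r) :
    (∀ s : ℂ, 0 ≤ s.re →
        (Matrix.fromRows (s • X.map Complex.ofReal - Xdot.map Complex.ofReal)
          (Matrix.fromRows (U.map Complex.ofReal) (Y.map Complex.ofReal))).rank =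
          n + m + r) ↔
      Detectable ((1 - H * C) * A) C := by
  -- One-sided inverses, unlike ranks, visibly survive complexification.
  obtain ⟨R, hR⟩ := exists_mul_eq_one_of_rank_eq_card_height (A := fromRows U (fromRows W X))
    (by simp only [hrank, Fintype.card_sum, Fintype.card_fin]; ring)
  obtain ⟨L, hL⟩ := exists_mul_eq_one_of_rank_eq_card_width (A := Bp)
    (by rw [hBp, Fintype.card_fin])
  have hG : H = Bp * (L * H) := eq_mul_mul_of_mul_mul_eq hH (hHrank.trans hBp.symm) hL
  have hmap {a b : Type} {P Q : Matrix a b ℝ} (h : P = Q) :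
      P.map Complex.ofRealHom = Q.map Complex.ofRealHom := by rw [h]
  have hBpc : LinearMap.ker (Bp.map Complex.ofRealHom).mulVecLin = ⊥ :=
    LinearMap.ker_eq_bot_of_inverse (g := (L.map Complex.ofRealHom).mulVecLin) <| by
      rw [← mulVecLin_mul, ← Matrix.map_mul, hL, Matrix.map_one _ (map_zero _) (map_one _),
        mulVecLin_one]
  unfold Detectable
  rw [show (Complex.ofReal : ℝ → ℂ) = Complex.ofRealHom from rfl]
  refine forall_congr' fun s => imp_congr_right fun _ => ?_
  simpa [Matrix.map_sub, Matrix.map_one, Matrix.map_mul] using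
    rank_fromRows_data_eq_iff (R := R.map Complex.ofRealHom) (G := (L * H).map Complex.ofRealHom)
      (by simpa [Matrix.map_mul, fromRows_map] using hmap hR) hBpc
      (by simpa [Matrix.map_mul] using hmap hH) (by simpa [Matrix.map_mul] using hmap hG)
      (by simpa [Matrix.map_mul, Matrix.map_add] using hmap hXdot)
      (by simpa [Matrix.map_mul] using hmap hY) s
end

section
/- Let A ∈ ℝ^{n×n}, B^m ∈ ℝ^{n×m}, B^p ∈ ℝ^{n×r} with rank(B^p) = r, C ∈ ℝ^{p×n}, and let U ∈ ℝ^{m×N}, W ∈ ℝ^{r×N}, X ∈ ℝ^{n×N} be data matrices such that [U; W; X] has full row rank m + r + n. Define Ẋ := A X + B^m U + B^p W and Ẏ := C Ẋ. If rank(C B^p) = rank(B^p) = r, then there exist matrices T_u ∈ ℝ^{n×m}, T_y ∈ ℝ^{n×p}, T_x ∈ ℝ^{n×n} with rank(T_y) = r such that Ẋ = T_u U + T_y Ẏ + T_x X. -/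
open Matrix

lemma aux_isUnit_of_rank_eq {r : ℕ} (G : Matrix (Fin r) (Fin r) ℝ) (h : G.rank = r) :
    IsUnit G := by
  rw [← Matrix.mulVec_injective_iff_isUnit]
  have hsurj : Function.Surjective G.mulVecLin := by
    rw [← LinearMap.range_eq_top]
    apply Submodule.eq_top_of_finrank_eq
    simpa [Matrix.rank, Module.finrank_fintype_fun_eq_card] using h
  exact LinearMap.injective_iff_surjective.mpr hsurj

/-- Existence of the data-driven representation: if `rank (C Bᵖ) = rank Bᵖ = r`, then
there exist `T_u, T_y, T_x` with `rank T_y = r` and `Ẋ = T_u U + T_y Ẏ + T_x X`. -/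
theorem stmt14 {n m r pdim N : ℕ}
    (A : Matrix (Fin n) (Fin n) ℝ)
    (Bm : Matrix (Fin n) (Fin m) ℝ) (Bp : Matrix (Fin n) (Fin r) ℝ)
    (hBp : Bp.rank = r)
    (C : Matrix (Fin pdim) (Fin n) ℝ)
    (U : Matrix (Fin m) (Fin N) ℝ) (W : Matrix (Fin r) (Fin N) ℝ)
    (X : Matrix (Fin n) (Fin N) ℝ)
    (hrank : (Matrix.fromRows U (Matrix.fromRows W X)).rank = m + r + n)
    (Xdot : Matrix (Fin n) (Fin N) ℝ) (hXdot : Xdot = A * X + Bm * U + Bp * W)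
    (Ydot : Matrix (Fin pdim) (Fin N) ℝ) (hYdot : Ydot = C * Xdot)
    (hCBp : (C * Bp).rank = r) :
    ∃ (Tu : Matrix (Fin n) (Fin m) ℝ) (Ty : Matrix (Fin n) (Fin pdim) ℝ)
      (Tx : Matrix (Fin n) (Fin n) ℝ),
      Ty.rank = r ∧ Xdot = Tu * U + Ty * Ydot + Tx * X := by
  set G := (C * Bp)ᵀ * (C * Bp) with hG
  have hGrank : G.rank = r := by rw [hG, Matrix.rank_transpose_mul_self]; exact hCBp
  have hGunit : IsUnit G := aux_isUnit_of_rank_eq G hGrank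
  set M := G⁻¹ * (C * Bp)ᵀ with hM
  have hMCBp : M * (C * Bp) = 1 := by
    rw [hM, Matrix.mul_assoc, ← hG,
      Matrix.nonsing_inv_mul G ((Matrix.isUnit_iff_isUnit_det G).mp hGunit)]
  set Ty := Bp * M with hTy
  have hTyCBp : Ty * (C * Bp) = Bp := by
    rw [hTy, Matrix.mul_assoc, hMCBp, Matrix.mul_one]
  have hTyrank : Ty.rank = r := by
    refine le_antisymm ?_ ?_
    · exact (Matrix.rank_mul_le_right Bp M).trans (M.rank_le_height)
    · calc r = Bp.rank := hBp.symm
        _ = (Ty * (C * Bp)).rank := by rw [hTyCBp]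
        _ ≤ Ty.rank := Matrix.rank_mul_le_left _ _
  refine ⟨Bm - Ty * (C * Bm), Ty, A - Ty * (C * A), hTyrank, ?_⟩
  have key : Ty * Ydot = Ty * (C * A) * X + Ty * (C * Bm) * U + Bp * W := by
    rw [hYdot, hXdot]
    have h3 : Ty * (C * (Bp * W)) = Bp * W := by
      rw [show C * (Bp * W) = (C * Bp) * W by rw [Matrix.mul_assoc],
        ← Matrix.mul_assoc, hTyCBp]
    simp only [Matrix.mul_add]
    rw [h3]
    simp only [Matrix.mul_assoc]
  rw [key, hXdot, Matrix.sub_mul, Matrix.sub_mul]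
  abel
end

section
/- Let A ∈ ℝ^{n×n}, B^m ∈ ℝ^{n×m}, B^p ∈ ℝ^{n×r} with rank(B^p) = r, C ∈ ℝ^{p×n}, and let U ∈ ℝ^{m×N}, W ∈ ℝ^{r×N}, X ∈ ℝ^{n×N} be data matrices such that [U; W; X] has full row rank m + r + n. Define Ẋ := A X + B^m U + B^p W, Y := C X, Ẏ := C Ẋ. Suppose that for every s ∈ ℂ with Re(s) ≥ 0 the rank over ℂ of [s X − Ẋ; U; Y] equals n + m + r. Then for EVERY triple of matrices T_u ∈ ℝ^{n×m}, T_y ∈ ℝ^{n×p}, T_x ∈ ℝ^{n×n} satisfying Ẋ = T_u U + T_y Ẏ + T_x X and rank(T_y) = r, the pair (T_x, C) is detectable. -/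
/-!
Since `[U; W; X]` has full row rank, comparing `Ẋ = T_u U + T_y C Ẋ + T_x X` with
`Ẋ = A X + B^m U + B^p W` coefficientwise gives `T_y C B^p = B^p` and `T_x = A - T_y C A`.
As `rank T_y = rank B^p`, the first identity forces `range T_y = range B^p`, so `T_y = B^p S` and
`T_x = A + B^p F` with `F = -S C A`. An undetectable mode, `(s I - T_x) v = 0` and `C v = 0`,
then gives the kernel vector `(0, F v, v)` of the system matrix
`[-B^m, -B^p, s I - A; I, 0, 0; 0, 0, C]`. This matrix maps `[U; W; X]` onto `[s X - Ẋ; U; Y]`,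
so by the rank hypothesis it has full column rank when `Re s ≥ 0`, and `v = 0`.
-/

open Matrix

open Module
open Complex (ofReal)

namespace Matrix

section Field

variable {K : Type*} [Field K] {l m n o : Type*} [Fintype n]

theorem rank_eq_card_width_iff {A : Matrix m n K} :
    A.rank = Fintype.card n ↔ ∀ v, A *ᵥ v = 0 → v = 0 := by
  have hk := A.mulVecLin.finrank_range_add_finrank_ker
  rw [finrank_fintype_fun_eq_card] at hk
  change finrank K (LinearMap.range A.mulVecLin) = _ ↔ ∀ v, A.mulVecLin v = 0 → v = 0
  rw [← LinearMap.ker_eq_bot', ← Submodule.finrank_eq_zero]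
  omega

theorem eq_zero_of_rank_mul_eq_card_width [Fintype o] {A : Matrix m n K} {B : Matrix n o K}
    (h : (A * B).rank = Fintype.card n) {v : n → K} (hv : A *ᵥ v = 0) : v = 0 :=
  rank_eq_card_width_iff.mp (le_antisymm A.rank_le_card_width (h ▸ rank_mul_le_left A B)) v hv

theorem eq_zero_of_mul_eq_zero_of_rank_eq_card_height [Fintype m] {P : Matrix l m K}
    {D : Matrix m n K} (hD : D.rank = Fintype.card m) (hP : P * D = 0) : P = 0 := by
  ext i j
  have hrow : Dᵀ *ᵥ P i = 0 := by
    rw [mulVec_transpose]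
    exact congrFun hP i
  exact congrFun (rank_eq_card_width_iff.mp (by rw [rank_transpose, hD]) _ hrow) j

theorem exists_mul_eq_of_range_mulVecLin_le [Fintype o] {B : Matrix m o K} {T : Matrix m n K}
    (h : LinearMap.range T.mulVecLin ≤ LinearMap.range B.mulVecLin) :
    ∃ S : Matrix o n K, B * S = T := by
  classical
  have hcol : ∀ j, ∃ u, B *ᵥ u = T.col j :=
    fun j => h ⟨Pi.single j 1, mulVec_single_one T j⟩
  choose S hS using hcol
  exact ⟨(of S)ᵀ, ext fun i j => congrFun (hS j) i⟩

theorem exists_mul_eq_of_mul_eq_of_rank_le [Fintype o] {T : Matrix m n K} {M : Matrix n o K}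
    {B : Matrix m o K} (hTM : T * M = B) (h : T.rank ≤ B.rank) :
    ∃ S : Matrix o n K, B * S = T := by
  have hle : LinearMap.range B.mulVecLin ≤ LinearMap.range T.mulVecLin := by
    rw [← hTM, mulVecLin_mul]
    exact LinearMap.range_comp_le_range _ _
  exact exists_mul_eq_of_range_mulVecLin_le (Submodule.eq_of_le_of_finrank_le hle h).ge

end Field

@[simp]
theorem map_ofReal_add {m n : Type*} (P Q : Matrix m n ℝ) :
    (P + Q).map ofReal = P.map ofReal + Q.map ofReal :=
  Matrix.map_add _ Complex.ofReal_add P Q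

@[simp]
theorem map_ofReal_mul {m n o : Type*} [Fintype n] (P : Matrix m n ℝ) (Q : Matrix n o ℝ) :
    (P * Q).map ofReal = P.map ofReal * Q.map ofReal :=
  Matrix.map_mul (f := Complex.ofRealHom)

end Matrix

section UnknownInput

variable {n m r p N : ℕ} (A : Matrix (Fin n) (Fin n) ℝ) (Bm : Matrix (Fin n) (Fin m) ℝ)
  (Bp : Matrix (Fin n) (Fin r) ℝ) (C : Matrix (Fin p) (Fin n) ℝ)

theorem coefficients_of_data_equation {U : Matrix (Fin m) (Fin N) ℝ}
    {W : Matrix (Fin r) (Fin N) ℝ} {X Xdot : Matrix (Fin n) (Fin N) ℝ}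
    {Ydot : Matrix (Fin p) (Fin N) ℝ} {Tu : Matrix (Fin n) (Fin m) ℝ}
    {Ty : Matrix (Fin n) (Fin p) ℝ} {Tx : Matrix (Fin n) (Fin n) ℝ}
    (hrank : (fromRows U (fromRows W X)).rank = m + r + n)
    (hXdot : Xdot = A * X + Bm * U + Bp * W) (hYdot : Ydot = C * Xdot)
    (hT : Xdot = Tu * U + Ty * Ydot + Tx * X) :
    Ty * C * Bp = Bp ∧ Tx = A - Ty * C * A := by
  have hcoeff : fromCols (Bm - Ty * C * Bm - Tu)
      (fromCols (Bp - Ty * C * Bp) (A - Ty * C * A - Tx)) * fromRows U (fromRows W X) = 0 := by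
    calc _ = Xdot - Ty * (C * Xdot) - (Tu * U + Tx * X) := by
          rw [hXdot]
          simp only [fromCols_mul_fromRows, Matrix.sub_mul, Matrix.mul_add, Matrix.mul_assoc]
          abel
      _ = 0 := by
          rw [sub_sub, sub_eq_zero]
          nth_rewrite 1 [hT]
          rw [hYdot]
          abel
  have hcard : Fintype.card (Fin m ⊕ (Fin r ⊕ Fin n)) = m + r + n := by simp [add_assoc]
  have hzero := eq_zero_of_mul_eq_zero_of_rank_eq_card_height (hrank.trans hcard.symm) hcoeff
  rw [← fromCols_zero, ← fromCols_zero, fromCols_ext_iff, fromCols_ext_iff] at hzero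
  exact ⟨(sub_eq_zero.mp hzero.2.1).symm, (sub_eq_zero.mp hzero.2.2).symm⟩

noncomputable def systemMatrix (s : ℂ) :
    Matrix (Fin n ⊕ (Fin m ⊕ Fin p)) (Fin m ⊕ (Fin r ⊕ Fin n)) ℂ :=
  fromRows (fromCols (-Bm.map ofReal) (fromCols (-Bp.map ofReal) (s • 1 - A.map ofReal)))
    (fromRows (fromCols 1 0) (fromCols 0 (fromCols 0 (C.map ofReal))))

theorem systemMatrix_mul {U : Matrix (Fin m) (Fin N) ℝ} {W : Matrix (Fin r) (Fin N) ℝ}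
    {X Xdot : Matrix (Fin n) (Fin N) ℝ} {Y : Matrix (Fin p) (Fin N) ℝ}
    (hXdot : Xdot = A * X + Bm * U + Bp * W) (hY : Y = C * X) (s : ℂ) :
    systemMatrix A Bm Bp C s *
        fromRows (U.map ofReal) (fromRows (W.map ofReal) (X.map ofReal)) =
      fromRows (s • X.map ofReal - Xdot.map ofReal) (fromRows (U.map ofReal) (Y.map ofReal)) := by
  subst hXdot hY
  simp only [systemMatrix, fromRows_mul, fromCols_mul_fromRows, map_ofReal_add, map_ofReal_mul,
    Matrix.sub_mul, Matrix.smul_mul, Matrix.one_mul, Matrix.neg_mul, Matrix.zero_mul]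
  congr 1
  · abel
  · simp

theorem eq_zero_of_systemMatrix_mulVec_eq_zero {U : Matrix (Fin m) (Fin N) ℝ}
    {W : Matrix (Fin r) (Fin N) ℝ} {X Xdot : Matrix (Fin n) (Fin N) ℝ}
    {Y : Matrix (Fin p) (Fin N) ℝ} (hXdot : Xdot = A * X + Bm * U + Bp * W) (hY : Y = C * X)
    {s : ℂ} (hdet : (fromRows (s • X.map ofReal - Xdot.map ofReal)
      (fromRows (U.map ofReal) (Y.map ofReal))).rank = n + m + r)
    {v : Fin m ⊕ (Fin r ⊕ Fin n) → ℂ} (hv : systemMatrix A Bm Bp C s *ᵥ v = 0) :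
    v = 0 := by
  refine eq_zero_of_rank_mul_eq_card_width
    (B := fromRows (U.map ofReal) (fromRows (W.map ofReal) (X.map ofReal))) ?_ hv
  rw [systemMatrix_mul A Bm Bp C hXdot hY, hdet]
  simp only [Fintype.card_sum, Fintype.card_fin]
  omega

theorem detectable_add_mul
    (hinj : ∀ s : ℂ, 0 ≤ s.re → ∀ v, systemMatrix A Bm Bp C s *ᵥ v = 0 → v = 0)
    (F : Matrix (Fin r) (Fin n) ℝ) : Detectable (A + Bp * F) C := by
  intro s hs
  refine (rank_eq_card_width_iff.mpr fun v hv => ?_).trans (Fintype.card_fin n)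
  rw [fromRows_mulVec, ← Sum.elim_zero_zero, Sum.elim_eq_iff] at hv
  obtain ⟨hmode, houtput⟩ := hv
  have hmode' : (s • 1 - A.map ofReal) *ᵥ v = Bp.map ofReal *ᵥ (F.map ofReal *ᵥ v) := by
    rwa [map_ofReal_add, map_ofReal_mul, ← sub_sub, sub_mulVec, ← mulVec_mulVec,
      sub_eq_zero] at hmode
  have hkernel : Sum.elim (0 : Fin m → ℂ) (Sum.elim (F.map ofReal *ᵥ v) v) = 0 := by
    refine hinj s hs _ ?_
    simp only [systemMatrix, fromRows_mulVec, fromCols_mulVec_sumElim, mulVec_zero, zero_mulVec,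
      neg_mulVec, houtput, hmode']
    simp
  exact funext fun i => congrFun hkernel (Sum.inr (Sum.inr i))

end UnknownInput

/-- Under the data-driven detectability condition, every solution `(T_u, T_y, T_x)` of
`Ẋ = T_u U + T_y Ẏ + T_x X` with `rank T_y = r` yields a detectable pair `(T_x, C)`. -/
theorem stmt15 {n m r pdim N : ℕ}
    (A : Matrix (Fin n) (Fin n) ℝ)
    (Bm : Matrix (Fin n) (Fin m) ℝ) (Bp : Matrix (Fin n) (Fin r) ℝ)
    (hBp : Bp.rank = r)
    (C : Matrix (Fin pdim) (Fin n) ℝ)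
    (U : Matrix (Fin m) (Fin N) ℝ) (W : Matrix (Fin r) (Fin N) ℝ)
    (X : Matrix (Fin n) (Fin N) ℝ)
    (hrank : (Matrix.fromRows U (Matrix.fromRows W X)).rank = m + r + n)
    (Xdot : Matrix (Fin n) (Fin N) ℝ) (hXdot : Xdot = A * X + Bm * U + Bp * W)
    (Y : Matrix (Fin pdim) (Fin N) ℝ) (hY : Y = C * X)
    (Ydot : Matrix (Fin pdim) (Fin N) ℝ) (hYdot : Ydot = C * Xdot)
    (hdet : ∀ s : ℂ, 0 ≤ s.re →
      (Matrix.fromRows (s • X.map Complex.ofReal - Xdot.map Complex.ofReal)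
        (Matrix.fromRows (U.map Complex.ofReal) (Y.map Complex.ofReal))).rank =
        n + m + r) :
    ∀ (Tu : Matrix (Fin n) (Fin m) ℝ) (Ty : Matrix (Fin n) (Fin pdim) ℝ)
      (Tx : Matrix (Fin n) (Fin n) ℝ),
      Xdot = Tu * U + Ty * Ydot + Tx * X → Ty.rank = r →
        Detectable Tx C := by
  intro Tu Ty Tx hT hTy
  obtain ⟨hTyCBp, hTx⟩ := coefficients_of_data_equation A Bm Bp C hrank hXdot hYdot hT
  obtain ⟨S, hS⟩ := exists_mul_eq_of_mul_eq_of_rank_le (M := C * Bp)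
    (by rw [← Matrix.mul_assoc, hTyCBp]) (hTy.trans hBp.symm).le
  have hTx' : Tx = A + Bp * -(S * C * A) := by
    rw [hTx, ← hS]
    simp only [Matrix.mul_neg, Matrix.mul_assoc, sub_eq_add_neg]
  rw [hTx']
  exact detectable_add_mul A Bm Bp C
    (fun s hs _ => eq_zero_of_systemMatrix_mulVec_eq_zero A Bm Bp C hXdot hY (hdet s hs)) _
end

section
/- Let A ∈ ℝ^{n×n}, B^m ∈ ℝ^{n×m}, B^p ∈ ℝ^{n×r}, C ∈ ℝ^{p×n}, and let U ∈ ℝ^{m×N}, W ∈ ℝ^{r×N}, X ∈ ℝ^{n×N} be data matrices such that [U; W; X] has full row rank m + r + n. Define Ẋ := A X + B^m U + B^p W and Ẏ := C Ẋ, and suppose T_u ∈ ℝ^{n×m}, T_y ∈ ℝ^{n×p}, T_x ∈ ℝ^{n×n} satisfy Ẋ = T_u U + T_y Ẏ + T_x X. Then for all u ∈ ℝ^m, w ∈ ℝ^r, x ∈ ℝ^n, setting v := A x + B^m u + B^p w, one has v = T_u u + T_y C v + T_x x. In other words, every online system trajectory satisfies ẋ(t) = T_u u(t) + T_y ẏ(t)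 + T_x x(t). -/
open Matrix

/-- The data-driven representation `(T_u, T_y, T_x)` reproduces the system dynamics
along every trajectory: if `Ẋ = T_u U + T_y Ẏ + T_x X` (with rich enough data), then
for all `u, w, x`, the vector `v = Ax + Bᵐu + Bᵖw` satisfies
`v = T_u u + T_y C v + T_x x`. -/
theorem stmt16 {n m r pdim N : ℕ}
    (A : Matrix (Fin n) (Fin n) ℝ)
    (Bm : Matrix (Fin n) (Fin m) ℝ) (Bp : Matrix (Fin n) (Fin r) ℝ)
    (C : Matrix (Fin pdim) (Fin n) ℝ)
    (U : Matrix (Fin m) (Fin N) ℝ) (W : Matrix (Fin r) (Fin N) ℝ)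
    (X : Matrix (Fin n) (Fin N) ℝ)
    (hrank : (Matrix.fromRows U (Matrix.fromRows W X)).rank = m + r + n)
    (Xdot : Matrix (Fin n) (Fin N) ℝ) (hXdot : Xdot = A * X + Bm * U + Bp * W)
    (Ydot : Matrix (Fin pdim) (Fin N) ℝ) (hYdot : Ydot = C * Xdot)
    (Tu : Matrix (Fin n) (Fin m) ℝ) (Ty : Matrix (Fin n) (Fin pdim) ℝ)
    (Tx : Matrix (Fin n) (Fin n) ℝ)
    (hT : Xdot = Tu * U + Ty * Ydot + Tx * X) :
    ∀ (u : Fin m → ℝ) (w : Fin r → ℝ) (x : Fin n → ℝ),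
      A *ᵥ x + Bm *ᵥ u + Bp *ᵥ w =
        Tu *ᵥ u + Ty *ᵥ (C *ᵥ (A *ᵥ x + Bm *ᵥ u + Bp *ᵥ w)) + Tx *ᵥ x := by
  intro u w x
  set M := Matrix.fromRows U (Matrix.fromRows W X) with hM
  -- surjectivity of mulVec of M
  have hsurj : Function.Surjective M.mulVecLin := by
    rw [← LinearMap.range_eq_top]
    apply Submodule.eq_top_of_finrank_eq
    rw [← Matrix.rank, hrank]
    simp [Module.finrank_pi]
    ring
  obtain ⟨z, hz⟩ := hsurj (Sum.elim u (Sum.elim w x))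
  have hz' : M *ᵥ z = Sum.elim u (Sum.elim w x) := hz
  rw [hM, Matrix.fromRows_mulVec, Matrix.fromRows_mulVec] at hz'
  have hU : U *ᵥ z = u := funext fun i => congrFun hz' (Sum.inl i)
  have hW : W *ᵥ z = w := funext fun i => congrFun hz' (Sum.inr (Sum.inl i))
  have hX : X *ᵥ z = x := funext fun i => congrFun hz' (Sum.inr (Sum.inr i))
  have h1 : Xdot *ᵥ z = A *ᵥ x + Bm *ᵥ u + Bp *ᵥ w := by
    rw [hXdot, Matrix.add_mulVec, Matrix.add_mulVec, ← Matrix.mulVec_mulVec,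
      ← Matrix.mulVec_mulVec, ← Matrix.mulVec_mulVec, hU, hW, hX]
  have h2 : Xdot *ᵥ z = Tu *ᵥ u + Ty *ᵥ (C *ᵥ (Xdot *ᵥ z)) + Tx *ᵥ x := by
    conv_lhs => rw [hT]
    rw [Matrix.add_mulVec, Matrix.add_mulVec, ← Matrix.mulVec_mulVec,
      ← Matrix.mulVec_mulVec, ← Matrix.mulVec_mulVec, hU, hX, hYdot,
      ← Matrix.mulVec_mulVec]
  rw [← h1]
  exact h2
end
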